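/- arXiv:2501.15025 — 8 statements merged into one kernel-verified Lean document; each statement's English description precedes it below -/
import Mathlib

section
/- If G is a finite simple graph containing exactly k triangles, then the Carathéodory number of G with respect to Δ-convexity is at most k + 1. -/
variable {V : Type*}

/-- `S` is Δ-convex: no vertex outside `S` is adjacent to two adjacent vertices of `S`. -/
def DeltaConvex (G : SimpleGraph V) (S : Set V) : Prop :=
  ∀ ⦃w u v : V⦄, u ∈ S → v ∈ S → G.Adj u v → G.Adj w u → G.Adj w v → w ∈ S

/-- The Δ-convex hull of `S`: the smallest Δ-convex set containing `S`. -/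
def deltaHull (G : SimpleGraph V) (S : Set V) : Set V :=
  ⋂₀ {T : Set V | S ⊆ T ∧ DeltaConvex G T}

/-- `S` is Carathéodory independent for Δ-convexity. -/
def CIndep [DecidableEq V] (G : SimpleGraph V) (S : Finset V) : Prop :=
  ∃ p ∈ deltaHull G ↑S, ∀ a ∈ S, p ∉ deltaHull G ↑(S.erase a)

/-- The Carathéodory number of `G` for Δ-convexity. -/
noncomputable def deltaCaratheodoryNumber [DecidableEq V] [Fintype V]
    (G : SimpleGraph V) : ℕ :=
  sSup {n : ℕ | ∃ S : Finset V, CIndep G S ∧ S.card = n}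

/-! A Carathéodory independent set `S` with witness `p` is covered by a family of pairwise
disjoint *blocks*: sets `B` that lie in the hull of `S ∩ B` and contain at most one more point
of `S` than triangles. Singletons of `S` form such a family, and as long as its union is not
Δ-convex, a triangle `w u v` with `u`, `v` covered and `w` not covered lets us merge the blocks
of `u` and `v` together with `w`; the triangle is new to the merged block, so the count survives.
A family with maximal union is therefore Δ-convex and contains `p`, and independence forces the
block of `p` to contain all of `S`. -/

open Finset

namespace SimpleGraph

variable {G : SimpleGraph V} {S T : Set V}

theorem subset_deltaHull : S ⊆ deltaHull G S :=
  fun _ hx _ hT => hT.1 hx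

theorem deltaHull_subset (hST : S ⊆ T) (hT : DeltaConvex G T) : deltaHull G S ⊆ T :=
  Set.sInter_subset_of_mem ⟨hST, hT⟩

theorem deltaHull_mono (hST : S ⊆ T) : deltaHull G S ⊆ deltaHull G T :=
  fun _ hx U hU => hx U ⟨hST.trans hU.1, hU.2⟩

theorem deltaConvex_deltaHull : DeltaConvex G (deltaHull G S) :=
  fun _ _ _ hu hv huv hwu hwv U hU => hU.2 (hu U hU) (hv U hU) huv hwu hwv

section Blocks

variable [DecidableEq V] [DecidableRel G.Adj]

variable (G) in
def trianglesIn (B : Finset V) : Finset (Finset V) :=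
  {t ∈ B.powerset | G.IsNClique 3 t}

theorem trianglesIn_mono {B C : Finset V} (h : B ⊆ C) : G.trianglesIn B ⊆ G.trianglesIn C :=
  filter_subset_filter _ (powerset_mono.mpr h)

variable (G) in
theorem card_trianglesIn_le_card_cliqueFinset [Fintype V] (B : Finset V) :
    #(G.trianglesIn B) ≤ #(G.cliqueFinset 3) :=
  card_le_card fun _ ht => mem_cliqueFinset_iff.mpr (mem_filter.mp ht).2

theorem card_trianglesIn_union_insert {B₁ B₂ : Finset V} {w u v : V} (hB : Disjoint B₁ B₂)
    (hw : w ∉ B₁ ∪ B₂) (hu : u ∈ B₁) (hv : v ∈ B₂) (huv : G.Adj u v) (hwu : G.Adj w u)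
    (hwv : G.Adj w v) :
    #(G.trianglesIn B₁) + #(G.trianglesIn B₂) + 1 ≤ #(G.trianglesIn (insert w (B₁ ∪ B₂))) := by
  have hdisj : Disjoint (G.trianglesIn B₁) (G.trianglesIn B₂) := by
    refine Finset.disjoint_left.mpr fun t ht₁ ht₂ => ?_
    obtain ⟨x, hx⟩ : t.Nonempty := card_pos.mp (by rw [(mem_filter.mp ht₁).2.card_eq]; norm_num)
    exact Finset.disjoint_left.mp hB (mem_powerset.mp (mem_filter.mp ht₁).1 hx)
      (mem_powerset.mp (mem_filter.mp ht₂).1 hx)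
  have hnew : {w, u, v} ∉ G.trianglesIn B₁ ∪ G.trianglesIn B₂ := fun h => hw <| by
    rcases mem_union.mp h with h | h <;>
      simp [mem_powerset.mp (mem_filter.mp h).1 (mem_insert_self w _)]
  have hsub : insert {w, u, v} (G.trianglesIn B₁ ∪ G.trianglesIn B₂) ⊆
      G.trianglesIn (insert w (B₁ ∪ B₂)) := by
    refine insert_subset ?_ (union_subset (trianglesIn_mono ?_) (trianglesIn_mono ?_))
    · refine mem_filter.mpr ⟨mem_powerset.mpr ?_, is3Clique_triple_iff.mpr ⟨hwu, hwv, huv⟩⟩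
      intro x hx
      simp only [mem_insert, mem_singleton] at hx
      rcases hx with rfl | rfl | rfl <;> simp [hu, hv]
    · exact subset_union_left.trans (subset_insert _ _)
    · exact subset_union_right.trans (subset_insert _ _)
  calc #(G.trianglesIn B₁) + #(G.trianglesIn B₂) + 1
      = #(insert {w, u, v} (G.trianglesIn B₁ ∪ G.trianglesIn B₂)) := by
        rw [card_insert_of_notMem hnew, card_union_of_disjoint hdisj]
    _ ≤ _ := card_le_card hsub

variable (G) in
structure IsBlock (S B : Finset V) : Prop where
  subset_deltaHull : (B : Set V) ⊆ deltaHull G ↑(S ∩ B)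
  card_inter_le : #(S ∩ B) ≤ #(G.trianglesIn B) + 1

theorem isBlock_singleton {S : Finset V} {a : V} (ha : a ∈ S) : G.IsBlock S {a} where
  subset_deltaHull := by
    rw [inter_singleton_of_mem ha]
    exact subset_deltaHull
  card_inter_le := (card_le_card inter_subset_right).trans (by simp)

theorem IsBlock.merge {S B₁ B₂ : Finset V} {w u v : V} (h₁ : G.IsBlock S B₁)
    (h₂ : G.IsBlock S B₂) (hB : B₁ = B₂ ∨ Disjoint B₁ B₂) (hw : w ∉ B₁ ∪ B₂) (hwS : w ∉ S)
    (hu : u ∈ B₁) (hv : v ∈ B₂) (huv : G.Adj u v) (hwu : G.Adj w u) (hwv : G.Adj w v) :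
    G.IsBlock S (insert w (B₁ ∪ B₂)) where
  subset_deltaHull := by
    have hB₁ : (B₁ : Set V) ⊆ deltaHull G ↑(S ∩ insert w (B₁ ∪ B₂)) :=
      h₁.subset_deltaHull.trans (deltaHull_mono (by gcongr; grind))
    have hB₂ : (B₂ : Set V) ⊆ deltaHull G ↑(S ∩ insert w (B₁ ∪ B₂)) :=
      h₂.subset_deltaHull.trans (deltaHull_mono (by gcongr; grind))
    rw [coe_insert, coe_union]
    exact Set.insert_subset (deltaConvex_deltaHull (hB₁ hu) (hB₂ hv) huv hwu hwv)
      (Set.union_subset hB₁ hB₂)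
  card_inter_le := by
    rw [inter_insert_of_notMem hwS, inter_union_distrib_left]
    rcases hB with rfl | hB
    · rw [union_self, union_self]
      exact h₁.card_inter_le.trans (by gcongr; exact trianglesIn_mono (subset_insert _ _))
    · calc #(S ∩ B₁ ∪ S ∩ B₂) ≤ #(S ∩ B₁) + #(S ∩ B₂) := card_union_le _ _
        _ ≤ #(G.trianglesIn B₁) + #(G.trianglesIn B₂) + 1 + 1 := by
          linarith [h₁.card_inter_le, h₂.card_inter_le]
        _ ≤ _ := by gcongr; exact card_trianglesIn_union_insert hB hw hu hv huv hwu hwv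

variable (G) in
structure IsBlockCover (S : Finset V) (𝓑 : Finset (Finset V)) : Prop where
  isBlock : ∀ B ∈ 𝓑, G.IsBlock S B
  pairwiseDisjoint : (𝓑 : Set (Finset V)).PairwiseDisjoint id
  subset_biUnion : S ⊆ 𝓑.biUnion id

theorem isBlockCover_image_singleton (S : Finset V) : G.IsBlockCover S (S.image singleton) where
  isBlock := by
    simp only [mem_image, forall_exists_index, and_imp, forall_apply_eq_imp_iff₂]
    exact fun a ha => isBlock_singleton ha
  pairwiseDisjoint := by
    rw [coe_image]
    exact fun _ ⟨_, _, ha⟩ _ ⟨_, _, hb⟩ hne => by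
      subst ha hb
      exact disjoint_singleton.mpr (fun h => hne (by rw [h]))
  subset_biUnion a ha := mem_biUnion.mpr ⟨{a}, mem_image_of_mem _ ha, mem_singleton_self a⟩

theorem IsBlockCover.exists_insert {S : Finset V} {𝓑 : Finset (Finset V)} {w u v : V}
    (h : G.IsBlockCover S 𝓑) (hu : u ∈ 𝓑.biUnion id) (hv : v ∈ 𝓑.biUnion id)
    (hw : w ∉ 𝓑.biUnion id) (huv : G.Adj u v) (hwu : G.Adj w u) (hwv : G.Adj w v) :
    ∃ 𝓒, G.IsBlockCover S 𝓒 ∧ insert w (𝓑.biUnion id) ⊆ 𝓒.biUnion id := by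
  obtain ⟨B₁, hB₁, hu₁⟩ := mem_biUnion.mp hu
  obtain ⟨B₂, hB₂, hv₂⟩ := mem_biUnion.mp hv
  set N := insert w (B₁ ∪ B₂)
  have hwB : w ∉ B₁ ∪ B₂ := fun hw' => hw <| by
    rcases mem_union.mp hw' with hw' | hw'
    exacts [mem_biUnion.mpr ⟨B₁, hB₁, hw'⟩, mem_biUnion.mpr ⟨B₂, hB₂, hw'⟩]
  have hN : G.IsBlock S N :=
    (h.isBlock B₁ hB₁).merge (h.isBlock B₂ hB₂) ((em _).imp_right (h.pairwiseDisjoint hB₁ hB₂))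
      hwB (fun hwS => hw (h.subset_biUnion hwS)) hu₁ hv₂ huv hwu hwv
  have hmeet : ∀ C ∈ 𝓑, ¬ Disjoint C N → C ⊆ N := by
    intro C hC hCN
    obtain ⟨x, hxC, hxN⟩ := not_disjoint_iff.mp hCN
    rcases mem_insert.mp hxN with rfl | hx
    · exact absurd (mem_biUnion.mpr ⟨C, hC, hxC⟩) hw
    rcases mem_union.mp hx with hx | hx
    · rw [h.pairwiseDisjoint.elim hC hB₁ (not_disjoint_iff.mpr ⟨x, hxC, hx⟩)]
      exact subset_union_left.trans (subset_insert _ _)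
    · rw [h.pairwiseDisjoint.elim hC hB₂ (not_disjoint_iff.mpr ⟨x, hxC, hx⟩)]
      exact subset_union_right.trans (subset_insert _ _)
  have hcover : insert w (𝓑.biUnion id) ⊆ (insert N {C ∈ 𝓑 | Disjoint C N}).biUnion id := by
    refine insert_subset (mem_biUnion.mpr ⟨N, mem_insert_self _ _, mem_insert_self _ _⟩) ?_
    refine biUnion_subset.mpr fun C hC => ?_
    by_cases hCN : Disjoint C N
    · exact subset_biUnion_of_mem id (mem_insert_of_mem (mem_filter.mpr ⟨hC, hCN⟩))
    · exact (hmeet C hC hCN).trans (subset_biUnion_of_mem id (mem_insert_self _ _))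
  refine ⟨_, ⟨?_, ?_, h.subset_biUnion.trans ((subset_insert _ _).trans hcover)⟩, hcover⟩
  · simp only [mem_insert, mem_filter]
    rintro B (rfl | ⟨hB, -⟩)
    exacts [hN, h.isBlock B hB]
  · rw [coe_insert, coe_filter]
    exact (h.pairwiseDisjoint.subset fun C hC => hC.1).insert fun C hC _ => hC.2.symm

theorem exists_isBlockCover_deltaConvex [Fintype V] (S : Finset V) :
    ∃ 𝓑, G.IsBlockCover S 𝓑 ∧ DeltaConvex G ↑(𝓑.biUnion id) := by
  obtain ⟨𝓑, h𝓑, hmax⟩ := Set.exists_max_image {𝓑 | G.IsBlockCover S 𝓑}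
    (fun 𝓑 => #(𝓑.biUnion id)) (Set.toFinite _) ⟨_, isBlockCover_image_singleton S⟩
  refine ⟨𝓑, h𝓑, fun w u v hu hv huv hwu hwv => by_contra fun hw => ?_⟩
  obtain ⟨𝓒, h𝓒, hsub⟩ := h𝓑.exists_insert hu hv hw huv hwu hwv
  have hlt := card_le_card hsub
  rw [card_insert_of_notMem hw] at hlt
  exact (hmax 𝓒 h𝓒).not_gt hlt

end Blocks

end SimpleGraph

open SimpleGraph in
theorem CIndep.card_le [DecidableEq V] [Fintype V] {G : SimpleGraph V} [DecidableRel G.Adj]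
    {S : Finset V} (hS : CIndep G S) : #S ≤ #(G.cliqueFinset 3) + 1 := by
  obtain ⟨p, hp, hpS⟩ := hS
  obtain ⟨𝓑, h𝓑, hconv⟩ := exists_isBlockCover_deltaConvex (G := G) S
  obtain ⟨B, hB, hpB⟩ :=
    mem_biUnion.mp (deltaHull_subset (by exact_mod_cast h𝓑.subset_biUnion) hconv hp)
  have hblock := h𝓑.isBlock B hB
  have hSB : S ⊆ B := by
    intro a ha
    by_contra haB
    have hsub : S ∩ B ⊆ S.erase a := fun x hx =>
      mem_erase.mpr ⟨by rintro rfl; exact haB (mem_inter.mp hx).2, (mem_inter.mp hx).1⟩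
    exact hpS a ha (deltaHull_mono (coe_subset.mpr hsub) (hblock.subset_deltaHull hpB))
  calc #S = #(S ∩ B) := by rw [inter_eq_left.mpr hSB]
    _ ≤ #(G.trianglesIn B) + 1 := hblock.card_inter_le
    _ ≤ #(G.cliqueFinset 3) + 1 :=
      Nat.add_le_add_right (card_trianglesIn_le_card_cliqueFinset G B) 1

theorem stmt_5 [Fintype V] [DecidableEq V] (G : SimpleGraph V)
    [DecidableRel G.Adj] (k : ℕ) (hk : (G.cliqueFinset 3).card = k) :
    deltaCaratheodoryNumber G ≤ k + 1 := by
  subst hk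
  exact csSup_le' fun _ ⟨_, hS, hn⟩ => hn ▸ hS.card_le
end

section
/- For every natural number n ≥ 1 there exists a finite simple graph G whose Carathéodory number with respect to Δ-convexity equals exactly n. -/
variable {V : Type*}

/-!
The upper bound `c_Δ(G) ≤ (|V| + 1) / 2` holds for every finite graph. Run the closure process
from `S`, adding one vertex `w` at a time through a triangle `uvw` with `u, v` already reached, and
keep the reached vertices partitioned into blocks, each lying in the hull of its own points of `S`:
adding `w` merges the blocks of `u` and `v` together with `w`. A block containing `k` points of `S`
arose from at least `k - 1` merges, each contributing a vertex outside `S`, so it has at least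
`2k - 1` vertices. If `p` witnesses the Carathéodory independence of `S`, the block of `p` must
contain all of `S`, whence `2|S| - 1 ≤ |V|`.

The chain of `n - 1` triangles on `2n - 1` vertices attains the bound: from `0` and the odd
vertices the hull creeps along the even vertices up to the last one, while without any one seed
vertex it stays inside a Δ-convex set missing that last vertex.
-/

open Finset

section Hull

variable {G : SimpleGraph V} {S T : Set V}

theorem subset_deltaHull : S ⊆ deltaHull G S := fun _ hx _ hT => hT.1 hx

theorem deltaConvex_deltaHull : DeltaConvex G (deltaHull G S) :=
  fun _ _ _ hu hv huv hwu hwv T hT => hT.2 (hu T hT) (hv T hT) huv hwu hwv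

theorem deltaHull_min (hST : S ⊆ T) (hT : DeltaConvex G T) : deltaHull G S ⊆ T :=
  fun _ hx => hx T ⟨hST, hT⟩

theorem deltaHull_mono (hST : S ⊆ T) : deltaHull G S ⊆ deltaHull G T :=
  deltaHull_min (hST.trans subset_deltaHull) deltaConvex_deltaHull

end Hull

variable [DecidableEq V]

theorem two_mul_card_union_inter_le {A B S : Finset V} (hA : 2 * #(A ∩ S) ≤ #A + 1)
    (hB : 2 * #(B ∩ S) ≤ #B + 1) (hAB : A = B ∨ Disjoint A B) :
    2 * #((A ∪ B) ∩ S) ≤ #(A ∪ B) + 2 := by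
  rcases hAB with rfl | hAB
  · rw [union_self]
    omega
  · have := card_union_le (A ∩ S) (B ∩ S)
    rw [union_inter_distrib_right, card_union_of_disjoint hAB]
    omega

structure IsDeltaBlockPartition (G : SimpleGraph V) (S P : Finset V) (block : V → Finset V) :
    Prop where
  subset : S ⊆ P
  mem_block : ∀ x ∈ P, x ∈ block x
  block_subset : ∀ x ∈ P, block x ⊆ P
  block_eq : ∀ x ∈ P, ∀ y ∈ block x, block y = block x
  block_subset_deltaHull : ∀ x ∈ P, ↑(block x) ⊆ deltaHull G ↑(block x ∩ S)
  two_mul_card_le : ∀ x ∈ P, 2 * #(block x ∩ S) ≤ #(block x) + 1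

namespace IsDeltaBlockPartition

variable {G : SimpleGraph V} {S P : Finset V} {block : V → Finset V}

theorem singleton : IsDeltaBlockPartition G S S fun x => {x} where
  subset := subset_rfl
  mem_block x _ := mem_singleton_self x
  block_subset _ hx := singleton_subset_iff.2 hx
  block_eq _ _ _ hy := by rw [mem_singleton.1 hy]
  block_subset_deltaHull x hx := by
    rw [singleton_inter_of_mem hx]
    exact subset_deltaHull
  two_mul_card_le x hx := by simp [singleton_inter_of_mem hx]

theorem block_eq_or_disjoint (h : IsDeltaBlockPartition G S P block) {x y : V} (hx : x ∈ P)
    (hy : y ∈ P) : block x = block y ∨ Disjoint (block x) (block y) := by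
  refine or_iff_not_imp_right.2 fun hxy => ?_
  obtain ⟨z, hzx, hzy⟩ := not_disjoint_iff.1 hxy
  rw [← h.block_eq x hx z hzx, h.block_eq y hy z hzy]

theorem notMem_block_of_notMem (h : IsDeltaBlockPartition G S P block) {x y z : V}
    (hx : x ∈ P) (hy : y ∈ P) (hyx : y ∉ block x) (hz : z ∈ block y) : z ∉ block x := by
  intro hzx
  have hyy := h.mem_block y hy
  rw [← h.block_eq y hy z hz, h.block_eq x hx z hzx] at hyy
  exact hyx hyy

theorem update (h : IsDeltaBlockPartition G S P block) {w : V} {C : Finset V} (hwC : w ∈ C)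
    (hC : C ⊆ insert w P) (hC_hull : ↑C ⊆ deltaHull G ↑(C ∩ S))
    (hC_card : 2 * #(C ∩ S) ≤ #C + 1) (hout : ∀ y ∈ P, y ∉ C → ∀ z ∈ block y, z ∉ C) :
    IsDeltaBlockPartition G S (insert w P) fun y => if y ∈ C then C else block y := by
  have hP : ∀ y ∈ insert w P, y ∉ C → y ∈ P := fun y hy hyC =>
    (mem_insert.1 hy).resolve_left fun hyw => hyC (hyw ▸ hwC)
  refine ⟨h.subset.trans (subset_insert w P), fun y hy => ?_, fun y hy => ?_,
    fun y hy z hz => ?_, fun y hy => ?_, fun y hy => ?_⟩ <;> by_cases hyC : y ∈ C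
  · simp [hyC]
  · simpa [hyC] using h.mem_block y (hP y hy hyC)
  · simpa [hyC] using hC
  · simpa [hyC] using (h.block_subset y (hP y hy hyC)).trans (subset_insert w P)
  · simp only [hyC, if_true] at hz ⊢
    simp [hz]
  · simp only [hyC, if_false] at hz ⊢
    simp [hout y (hP y hy hyC) hyC z hz, h.block_eq y (hP y hy hyC) z hz]
  · simpa [hyC] using hC_hull
  · simpa [hyC] using h.block_subset_deltaHull y (hP y hy hyC)
  · simpa [hyC] using hC_card
  · simpa [hyC] using h.two_mul_card_le y (hP y hy hyC)

theorem exists_insert (h : IsDeltaBlockPartition G S P block) {u v w : V} (hu : u ∈ P)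
    (hv : v ∈ P) (hw : w ∉ P) (huv : G.Adj u v) (hwu : G.Adj w u) (hwv : G.Adj w v) :
    ∃ block', IsDeltaBlockPartition G S (insert w P) block' := by
  set C := insert w (block u ∪ block v)
  have huvP : block u ∪ block v ⊆ P := union_subset (h.block_subset u hu) (h.block_subset v hv)
  have hC_hull : ↑C ⊆ deltaHull G ↑(C ∩ S) := by
    have hsub : ∀ x ∈ P, block x ⊆ C → ↑(block x) ⊆ deltaHull G ↑(C ∩ S) := fun x hx hxC =>
      (h.block_subset_deltaHull x hx).trans (deltaHull_mono (by gcongr))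
    have hu' := hsub u hu (subset_union_left.trans (subset_insert _ _))
    have hv' := hsub v hv (subset_union_right.trans (subset_insert _ _))
    have hw' : w ∈ deltaHull G ↑(C ∩ S) :=
      deltaConvex_deltaHull (hu' (h.mem_block u hu)) (hv' (h.mem_block v hv)) huv hwu hwv
    rw [coe_insert, coe_union, Set.insert_subset_iff, Set.union_subset_iff]
    exact ⟨hw', hu', hv'⟩
  have hC_card : 2 * #(C ∩ S) ≤ #C + 1 := by
    rw [insert_inter_of_notMem fun hwS => hw (h.subset hwS),
      card_insert_of_notMem fun hwuv => hw (huvP hwuv)]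
    exact two_mul_card_union_inter_le (h.two_mul_card_le u hu) (h.two_mul_card_le v hv)
      (h.block_eq_or_disjoint hu hv)
  refine ⟨_, h.update (mem_insert_self w _) (insert_subset_insert w huvP) hC_hull hC_card ?_⟩
  intro y hy hyC z hz hzC
  simp only [mem_insert, mem_union, not_or] at hyC hzC
  rcases hzC with rfl | hzu | hzv
  · exact hw (h.block_subset y hy hz)
  · exact h.notMem_block_of_notMem hu hy hyC.2.1 hz hzu
  · exact h.notMem_block_of_notMem hv hy hyC.2.2 hz hzv

end IsDeltaBlockPartition

variable [Fintype V]

theorem exists_isDeltaBlockPartition_deltaConvex (G : SimpleGraph V) (S : Finset V) :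
    ∃ P block, IsDeltaBlockPartition G S P block ∧ DeltaConvex G ↑P := by
  classical
  obtain ⟨P, hP, hmax⟩ := exists_max_image
    (univ.filter fun P => ∃ block, IsDeltaBlockPartition G S P block) card
    ⟨S, mem_filter.2 ⟨mem_univ S, _, IsDeltaBlockPartition.singleton⟩⟩
  obtain ⟨block, hblock⟩ := (mem_filter.1 hP).2
  refine ⟨P, block, hblock, fun w u v hu hv huv hwu hwv => ?_⟩
  by_contra hw
  obtain ⟨block', h'⟩ := hblock.exists_insert hu hv hw huv hwu hwv
  have := hmax (insert w P) (mem_filter.2 ⟨mem_univ _, block', h'⟩)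
  rw [card_insert_of_notMem hw] at this
  omega

theorem CIndep.two_mul_card_le {G : SimpleGraph V} {S : Finset V} (hS : CIndep G S) :
    2 * #S ≤ Fintype.card V + 1 := by
  obtain ⟨p, hp, hmin⟩ := hS
  obtain ⟨P, block, hblock, hconv⟩ := exists_isDeltaBlockPartition_deltaConvex G S
  have hpP : p ∈ P := deltaHull_min (coe_subset.2 hblock.subset) hconv hp
  have hpT : p ∈ deltaHull G ↑(block p ∩ S) := hblock.block_subset_deltaHull p hpP
    (hblock.mem_block p hpP)
  have hT : block p ∩ S = S := by
    refine (inter_subset_right).antisymm fun a ha => by_contra fun haT => hmin a ha ?_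
    refine deltaHull_mono (coe_subset.2 fun x hx => mem_erase.2 ⟨?_, (mem_inter.1 hx).2⟩) hpT
    rintro rfl
    exact haT hx
  calc 2 * #S = 2 * #(block p ∩ S) := by rw [hT]
    _ ≤ #(block p) + 1 := hblock.two_mul_card_le p hpP
    _ ≤ Fintype.card V + 1 := by grw [card_le_univ]

theorem deltaCaratheodoryNumber_le (G : SimpleGraph V) :
    deltaCaratheodoryNumber G ≤ (Fintype.card V + 1) / 2 := by
  refine csSup_le' ?_
  rintro _ ⟨S, hS, rfl⟩
  have := hS.two_mul_card_le
  omega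

theorem CIndep.card_le_deltaCaratheodoryNumber {G : SimpleGraph V} {S : Finset V}
    (hS : CIndep G S) : #S ≤ deltaCaratheodoryNumber G :=
  le_csSup ⟨Fintype.card V, by rintro _ ⟨T, -, rfl⟩; exact card_le_univ T⟩ ⟨S, hS, rfl⟩

/-- The path of `n - 1` triangles `{2i, 2i+1, 2i+2}`, consecutive ones sharing an even vertex. -/
def triangleChain (n : ℕ) : SimpleGraph (Fin (2 * n - 1)) :=
  SimpleGraph.fromRel fun u v => u.val + 1 = v.val ∨ (u.val + 2 = v.val ∧ u.val % 2 = 0)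

theorem triangleChain_adj {n : ℕ} {u v : Fin (2 * n - 1)} :
    (triangleChain n).Adj u v ↔ u.val + 1 = v.val ∨ v.val + 1 = u.val ∨
      (u.val + 2 = v.val ∧ u.val % 2 = 0) ∨ (v.val + 2 = u.val ∧ v.val % 2 = 0) := by
  simp only [triangleChain, SimpleGraph.fromRel_adj, ne_eq, Fin.ext_iff]
  omega

/-- `k = 0` contributes the vertex `0`, by truncated subtraction. -/
def chainSeed (n : ℕ) : Finset (Fin (2 * n - 1)) :=
  univ.image fun k : Fin n => ⟨2 * k - 1, by omega⟩

theorem mem_chainSeed {n : ℕ} {x : Fin (2 * n - 1)} :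
    x ∈ chainSeed n ↔ x.val = 0 ∨ x.val % 2 = 1 := by
  simp only [chainSeed, mem_image, mem_univ, true_and, Fin.ext_iff]
  constructor
  · rintro ⟨k, hk⟩
    omega
  · intro hx
    exact ⟨⟨(x.val + 1) / 2, by omega⟩, by simp only; omega⟩

theorem card_chainSeed (n : ℕ) : #(chainSeed n) = n := by
  have hinj : Function.Injective fun k : Fin n => (⟨2 * k - 1, by omega⟩ : Fin (2 * n - 1)) :=
    fun a b hab => Fin.ext (by simp only [Fin.ext_iff] at hab; omega)
  rw [chainSeed, card_image_of_injective _ hinj, card_univ, Fintype.card_fin]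

theorem even_mem_deltaHull_chainSeed {n : ℕ} (k : ℕ) (hk : 2 * k < 2 * n - 1) :
    (⟨2 * k, hk⟩ : Fin (2 * n - 1)) ∈ deltaHull (triangleChain n) ↑(chainSeed n) := by
  induction k with
  | zero => exact subset_deltaHull (mem_chainSeed.2 (Or.inl rfl))
  | succ k ih =>
    have hodd : (⟨2 * k + 1, by omega⟩ : Fin (2 * n - 1)) ∈ chainSeed n :=
      mem_chainSeed.2 (Or.inr (by dsimp only; omega))
    exact deltaConvex_deltaHull (ih (by omega)) (subset_deltaHull hodd)
      (triangleChain_adj.2 (by dsimp only; omega)) (triangleChain_adj.2 (by dsimp only; omega))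
      (triangleChain_adj.2 (by dsimp only; omega))

theorem deltaHull_chainSeed_erase_subset {n : ℕ} {a : Fin (2 * n - 1)} (ha : a ∈ chainSeed n) :
    deltaHull (triangleChain n) ↑((chainSeed n).erase a) ⊆
      {v | (v.val % 2 = 0 ∧ v.val < a.val) ∨ (v.val % 2 = 1 ∧ v ≠ a)} := by
  have ha' := mem_chainSeed.1 ha
  refine deltaHull_min (fun x hx => ?_) fun w u v hu hv huv hwu hwv => ?_
  · obtain ⟨hxa, hx⟩ := mem_erase.1 hx
    have := mem_chainSeed.1 hx
    have := Fin.val_ne_of_ne hxa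
    simp only [Set.mem_ofPred_eq, ne_eq, Fin.ext_iff]
    omega
  · rw [triangleChain_adj] at huv hwu hwv
    simp only [Set.mem_ofPred_eq, ne_eq, Fin.ext_iff] at hu hv ⊢
    omega

theorem cIndep_chainSeed {n : ℕ} (hn : 1 ≤ n) : CIndep (triangleChain n) (chainSeed n) := by
  refine ⟨⟨2 * (n - 1), by omega⟩, even_mem_deltaHull_chainSeed (n - 1) _,
    fun a ha hmem => ?_⟩
  have := deltaHull_chainSeed_erase_subset ha hmem
  simp only [Set.mem_ofPred_eq, ne_eq, Fin.ext_iff] at this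
  omega

theorem stmt_6 (n : ℕ) (hn : 1 ≤ n) :
    ∃ (W : Type) (d : DecidableEq W) (i : Fintype W) (G : SimpleGraph W),
      @deltaCaratheodoryNumber W d i G = n := by
  refine ⟨Fin (2 * n - 1), inferInstance, inferInstance, triangleChain n, le_antisymm ?_ ?_⟩
  · have := deltaCaratheodoryNumber_le (triangleChain n)
    rw [Fintype.card_fin] at this
    omega
  · calc n = #(chainSeed n) := (card_chainSeed n).symm
      _ ≤ _ := (cIndep_chainSeed hn).card_le_deltaCaratheodoryNumber
end

section
/- Let S be a Carathéodory independent set of a graph G with |S| ≥ 2 under Δ-convexity. Then every vertex of S lies on some triangle of G. -/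
variable {V : Type*}

theorem stmt_7 [Fintype V] [DecidableEq V] (G : SimpleGraph V) (S : Finset V)
    (hS : CIndep G S) (h2 : 2 ≤ S.card) :
    ∀ v ∈ S, ∃ x y : V, G.Adj v x ∧ G.Adj v y ∧ G.Adj x y := by
  have subset_hull : ∀ (A : Set V), A ⊆ deltaHull G A := by
    intro A x hx T hT; exact hT.1 hx
  have hull_min : ∀ (A T : Set V), A ⊆ T → DeltaConvex G T → deltaHull G A ⊆ T := by
    intro A T h1 h2; exact Set.sInter_subset_of_mem ⟨h1, h2⟩
  have hull_convex : ∀ (A : Set V), DeltaConvex G (deltaHull G A) := by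
    intro A w u v hu hv huv hwu hwv T hT
    exact hT.2 (hu T hT) (hv T hT) huv hwu hwv
  intro v hv
  by_contra hno
  push_neg at hno
  obtain ⟨p, hp, hpe⟩ := hS
  set T : Set V := deltaHull G ↑(S.erase v) ∪ {v} with hT
  have hconv : DeltaConvex G T := by
    intro w u u' hu hu' huu' hwu hwu'
    rcases hu with hu | hu
    · rcases hu' with hu' | hu'
      · exact Or.inl (hull_convex _ hu hu' huu' hwu hwu')
      · simp only [Set.mem_singleton_iff] at hu'
        subst hu'
        exact absurd (hno w u hwu'.symm huu'.symm hwu) (fun h => h)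
    · simp only [Set.mem_singleton_iff] at hu
      subst hu
      rcases hu' with hu' | hu'
      · exact absurd (hno w u' hwu.symm huu' hwu') (fun h => h)
      · simp only [Set.mem_singleton_iff] at hu'
        subst hu'
        exact absurd huu' G.irrefl
  have hsub : (↑S : Set V) ⊆ T := by
    intro x hx
    by_cases hxv : x = v
    · exact Or.inr (by simp [hxv])
    · refine Or.inl (subset_hull _ ?_)
      simp only [Finset.coe_erase, Set.mem_diff, Set.mem_singleton_iff]
      exact ⟨hx, hxv⟩
  have hpT : p ∈ T := hull_min _ _ hsub hconv hp
  have hpv : p = v := by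
    rcases hpT with h | h
    · exact absurd h (hpe v hv)
    · simpa using h
  obtain ⟨a, ha, hav⟩ := Finset.exists_mem_ne (lt_of_lt_of_le one_lt_two h2) v
  have hvS : v ∈ S.erase a := Finset.mem_erase.mpr ⟨hav.symm, hv⟩
  exact hpe a ha (hpv ▸ subset_hull _ (by exact_mod_cast hvS))
end

section
/- Let S be a Carathéodory independent set of a graph G with |S| ≥ 2 under Δ-convexity. Then the subgraph of G induced by S contains at least one edge. -/
variable {V : Type*}

/- An independent set is vacuously Δ-convex, hence its own hull. So if `S` spanned no edge, the
witness `p` in the hull of `S` would lie in `S`; any other `a ∈ S` (there is one, as `|S| ≥ 2`)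
leaves `p` in the independent set `S.erase a`, which is its own hull. -/

theorem SimpleGraph.IsIndepSet.deltaConvex {G : SimpleGraph V} {T : Set V}
    (hT : G.IsIndepSet T) : DeltaConvex G T :=
  fun _ _ _ hu hv huv _ _ => absurd huv (hT hu hv (G.ne_of_adj huv))

theorem DeltaConvex.deltaHull_eq {G : SimpleGraph V} {T : Set V} (hT : DeltaConvex G T) :
    deltaHull G T = T :=
  Set.Subset.antisymm (Set.sInter_subset_of_mem ⟨subset_rfl, hT⟩)
    fun _ hx => Set.mem_sInter.mpr fun _ hT' => hT'.1 hx

theorem stmt_8_general [DecidableEq V] (G : SimpleGraph V) (S : Finset V)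
    (hS : CIndep G S) (h2 : 2 ≤ S.card) :
    ∃ u ∈ S, ∃ v ∈ S, G.Adj u v := by
  by_contra! hno
  have hindep : G.IsIndepSet (S : Set V) := fun u hu v hv _ => hno u hu v hv
  obtain ⟨p, hp, hp_not⟩ := hS
  rw [hindep.deltaConvex.deltaHull_eq] at hp
  obtain ⟨a, haS, hap⟩ := Finset.exists_mem_ne h2 p
  have hindep_erase : G.IsIndepSet (S.erase a : Set V) :=
    hindep.mono (Finset.coe_subset.mpr (S.erase_subset a))
  apply hp_not a haS
  rw [hindep_erase.deltaConvex.deltaHull_eq]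
  exact Finset.mem_erase.mpr ⟨hap.symm, hp⟩

theorem stmt_8 [Fintype V] [DecidableEq V] (G : SimpleGraph V) (S : Finset V)
    (hS : CIndep G S) (h2 : 2 ≤ S.card) :
    ∃ u ∈ S, ∃ v ∈ S, G.Adj u v :=
  stmt_8_general G S hS h2
end

section
/- Let S be an exchange independent set of a graph G under Δ-convexity with |S| ≥ 3. Then the subgraph of G induced by S contains at least one edge. -/
variable {V : Type*}

/-- `S` is exchange independent for Δ-convexity. -/
def EIndep [DecidableEq V] (G : SimpleGraph V) (S : Finset V) : Prop :=
  S.card = 1 ∨ ∃ p ∈ S, ∃ q ∈ deltaHull G ↑(S.erase p),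
    ∀ a ∈ S.erase p, q ∉ deltaHull G ↑(S.erase a)

/-- The exchange number of `G` for Δ-convexity. -/
noncomputable def deltaExchangeNumber [DecidableEq V] [Fintype V]
    (G : SimpleGraph V) : ℕ :=
  sSup {n : ℕ | ∃ S : Finset V, EIndep G S ∧ S.card = n}

lemma hull_of_indep (G : SimpleGraph V) (T : Set V)
    (hT : ∀ u ∈ T, ∀ v ∈ T, ¬ G.Adj u v) : deltaHull G T = T := by
  apply subset_antisymm
  · intro x hx
    exact hx T ⟨subset_rfl, fun w u v hu hv huv _ _ => absurd huv (hT u hu v hv)⟩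
  · intro x hx T' hT'
    exact hT'.1 hx

theorem stmt_12 [Fintype V] [DecidableEq V] (G : SimpleGraph V) (S : Finset V)
    (hS : EIndep G S) (h3 : 3 ≤ S.card) :
    ∃ u ∈ S, ∃ v ∈ S, G.Adj u v := by
  by_contra h
  push_neg at h
  have hind : ∀ (A : Finset V), A ⊆ S → ∀ u ∈ (A : Set V), ∀ v ∈ (A : Set V), ¬ G.Adj u v := by
    intro A hA u hu v hv
    exact h u (hA hu) v (hA hv)
  rcases hS with h1 | ⟨p, hp, q, hq, hqa⟩
  · omega
  · rw [hull_of_indep G _ (hind _ (Finset.erase_subset _ _))] at hq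
    have hq' : q ∈ S.erase p := hq
    have hqS : q ∈ S := Finset.mem_of_mem_erase hq'
    -- find a ∈ S.erase p with a ≠ q
    have hcard : 2 ≤ (S.erase p).card := by
      have := Finset.card_erase_of_mem hp; omega
    have : ∃ a ∈ S.erase p, a ≠ q := by
      by_contra hall
      push_neg at hall
      have : (S.erase p) ⊆ {q} := fun a ha => Finset.mem_singleton.2 (hall a ha)
      have := Finset.card_le_card this
      simp at this; omega
    obtain ⟨a, ha, haq⟩ := this
    have := hqa a ha
    rw [hull_of_indep G _ (hind _ (Finset.erase_subset _ _))] at this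
    exact this (Finset.mem_erase.2 ⟨haq.symm, hqS⟩)
end

section
/- Let S be an exchange independent set of a graph G under Δ-convexity with |S| ≥ 3. Then at most one vertex of S fails to lie on a triangle of G. -/
variable {V : Type*}

lemma subset_deltaHull_s13 (G : SimpleGraph V) (A : Set V) : A ⊆ deltaHull G A :=
  Set.subset_sInter fun _ hT => hT.1

lemma deltaHull_mono_s13 (G : SimpleGraph V) {A B : Set V} (h : A ⊆ B) :
    deltaHull G A ⊆ deltaHull G B :=
  Set.sInter_subset_sInter fun _ hT => ⟨h.trans hT.1, hT.2⟩

lemma deltaConvex_deltaHull_s13 (G : SimpleGraph V) (A : Set V) :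
    DeltaConvex G (deltaHull G A) := by
  intro w u v hu hv huv hwu hwv
  simp only [deltaHull, Set.mem_sInter] at *
  intro T hT
  exact hT.2 (hu T hT) (hv T hT) huv hwu hwv

lemma deltaHull_subset_of_notri (G : SimpleGraph V) (A : Set V) (u : V)
    (hu : ¬ ∃ x y : V, G.Adj u x ∧ G.Adj u y ∧ G.Adj x y) :
    deltaHull G A ⊆ deltaHull G (A \ {u}) ∪ {u} := by
  apply Set.sInter_subset_of_mem
  constructor
  · intro a ha
    by_cases h : a = u
    · right; simp [h]
    · left; exact subset_deltaHull_s13 _ _ ⟨ha, h⟩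
  · intro w x y hx hy hxy hwx hwy
    rcases hx with hx | hx
    · rcases hy with hy | hy
      · left; exact deltaConvex_deltaHull_s13 G _ hx hy hxy hwx hwy
      · exact absurd ⟨x, w, (Set.eq_of_mem_singleton hy ▸ hxy.symm),
          (Set.eq_of_mem_singleton hy ▸ hwy.symm), hwx.symm⟩ hu
    · exact absurd ⟨y, w, (Set.eq_of_mem_singleton hx ▸ hxy),
        (Set.eq_of_mem_singleton hx ▸ hwx.symm), hwy.symm⟩ hu

theorem stmt_13 [Fintype V] [DecidableEq V] (G : SimpleGraph V) (S : Finset V)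
    (hS : EIndep G S) (h3 : 3 ≤ S.card) :
    ∀ u ∈ S, ∀ v ∈ S, u ≠ v →
      (∃ x y : V, G.Adj u x ∧ G.Adj u y ∧ G.Adj x y) ∨
      (∃ x y : V, G.Adj v x ∧ G.Adj v y ∧ G.Adj x y) := by
  intro u hu v hv huv
  by_contra hcon
  push_neg at hcon
  obtain ⟨hcu, hcv⟩ := hcon
  rcases hS with h1 | ⟨p, hp, q, hq, hq2⟩
  · omega
  -- key: for any w ∈ S.erase p not on a triangle, q = w
  have key : ∀ w ∈ S.erase p, (¬ ∃ x y : V, G.Adj w x ∧ G.Adj w y ∧ G.Adj x y) → q = w := by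
    intro w hw hwt
    have := deltaHull_subset_of_notri G (↑(S.erase p)) w hwt hq
    rcases this with h | h
    · exfalso
      apply hq2 w hw
      refine deltaHull_mono_s13 G ?_ h
      intro a ha
      simp only [Finset.coe_erase, Set.mem_diff, Set.mem_singleton_iff] at ha ⊢
      exact ⟨ha.1.1, ha.2⟩
    · exact h
  by_cases hup : u = p
  · have hvp : v ∈ S.erase p := Finset.mem_erase.2 ⟨fun h => huv (hup.trans h.symm), hv⟩
    have hqv : q = v := key v hvp (by push_neg; exact hcv)
    -- pick a ∈ S.erase p with a ≠ v
    have h2 : 2 ≤ (S.erase p).card := by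
      have := Finset.card_erase_of_mem hp; omega
    obtain ⟨a, ha, hav⟩ : ∃ a ∈ S.erase p, a ≠ v := by
      by_contra hc
      push_neg at hc
      have : S.erase p ⊆ {v} := fun x hx => Finset.mem_singleton.2 (hc x hx)
      have := Finset.card_le_card this
      simp at this; omega
    apply hq2 a ha
    apply subset_deltaHull_s13
    simp only [Finset.coe_erase, Set.mem_diff, Set.mem_singleton_iff]
    exact ⟨by simpa [hqv] using hv, by simp [hqv, hav.symm]⟩
  · have hvp' : v ≠ p ∨ True := Or.inr trivial
    have hqu : q = u := key u (Finset.mem_erase.2 ⟨hup, hu⟩) (by push_neg; exact hcu)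
    by_cases hvp : v = p
    · -- symmetric: u plays the role of v above
      have h2 : 2 ≤ (S.erase p).card := by
        have := Finset.card_erase_of_mem hp; omega
      obtain ⟨a, ha, hau⟩ : ∃ a ∈ S.erase p, a ≠ u := by
        by_contra hc
        push_neg at hc
        have : S.erase p ⊆ {u} := fun x hx => Finset.mem_singleton.2 (hc x hx)
        have := Finset.card_le_card this
        simp at this; omega
      apply hq2 a ha
      apply subset_deltaHull_s13
      simp only [Finset.coe_erase, Set.mem_diff, Set.mem_singleton_iff]
      exact ⟨by simpa [hqu] using hu, by simp [hqu, hau.symm]⟩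
    · have hqv : q = v := key v (Finset.mem_erase.2 ⟨hvp, hv⟩) (by push_neg; exact hcv)
      exact huv (hqu ▸ hqv)
end

section
/- In any finite convexity space, if S is a set containing three distinct elements u, v, w such that ⟨S∖{u}⟩ ∪ ⟨S∖{v}⟩ = ⟨S∖{u}⟩ ∪ ⟨S∖{w}⟩ = ⟨S∖{v}⟩ ∪ ⟨S∖{w}⟩ = ⟨S⟩, then S is exchange dependent. -/
/-- A finite convexity space: a family of "convex" subsets of a finite set `X`,
containing `∅` and `X` and closed under intersections. -/
structure ConvexitySpace (X : Type*) [Fintype X] where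
  convexSets : Set (Set X)
  empty_mem : ∅ ∈ convexSets
  univ_mem : Set.univ ∈ convexSets
  sInter_mem : ∀ 𝒮 ⊆ convexSets, 𝒮.Nonempty → ⋂₀ 𝒮 ∈ convexSets

variable {X : Type*} [Fintype X]

/-- Convex hull: the smallest convex set containing `S`. -/
def ConvexitySpace.hull (C : ConvexitySpace X) (S : Set X) : Set X :=
  ⋂₀ {T : Set X | T ∈ C.convexSets ∧ S ⊆ T}

/-- `S` is exchange dependent. -/
def ConvexitySpace.ExchangeDependent (C : ConvexitySpace X) (S : Set X) : Prop :=
  ∀ p ∈ S, C.hull (S \ {p}) ⊆ ⋃ a ∈ S \ {p}, C.hull (S \ {a})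

theorem stmt_14 (C : ConvexitySpace X) (S : Set X) (u v w : X)
    (hu : u ∈ S) (hv : v ∈ S) (hw : w ∈ S)
    (huv : u ≠ v) (huw : u ≠ w) (hvw : v ≠ w)
    (h1 : C.hull (S \ {u}) ∪ C.hull (S \ {v}) = C.hull S)
    (h2 : C.hull (S \ {u}) ∪ C.hull (S \ {w}) = C.hull S)
    (h3 : C.hull (S \ {v}) ∪ C.hull (S \ {w}) = C.hull S) :
    C.ExchangeDependent S := by
  have mono : ∀ A B : Set X, A ⊆ B → C.hull A ⊆ C.hull B := by
    intro A B hAB x hx T hT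
    exact hx T ⟨hT.1, hAB.trans hT.2⟩
  intro p hp x hx
  have hxS : x ∈ C.hull S := mono _ _ (Set.diff_subset) hx
  have key : ∀ a b : X, a ∈ S → b ∈ S → a ≠ p → b ≠ p →
      C.hull (S \ {a}) ∪ C.hull (S \ {b}) = C.hull S →
      x ∈ ⋃ a ∈ S \ {p}, C.hull (S \ {a}) := by
    intro a b ha hb hap hbp heq
    rw [← heq] at hxS
    rcases hxS with h | h
    · exact Set.mem_biUnion ⟨ha, hap⟩ h
    · exact Set.mem_biUnion ⟨hb, hbp⟩ h
  by_cases hpu : p = u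
  · exact key v w hv hw (fun h => huv (hpu ▸ h.symm)) (fun h => huw (hpu ▸ h.symm)) h3
  · by_cases hpv : p = v
    · exact key u w hu hw (fun h => hpu h.symm) (fun h => hvw (hpv ▸ h.symm)) h2
    · exact key u v hu hv (fun h => hpu h.symm) (fun h => hpv h.symm) h1
end

section
/- In any finite convexity space, if S contains four distinct elements u, v, w, x with ⟨S∖{u}⟩ ∪ ⟨S∖{v}⟩ = ⟨S∖{w}⟩ ∪ ⟨S∖{x}⟩ = ⟨S⟩, then S is exchange dependent. -/
variable {X : Type*} [Fintype X]

theorem stmt_15 (C : ConvexitySpace X) (S : Set X) (u v w x : X)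
    (hu : u ∈ S) (hv : v ∈ S) (hw : w ∈ S) (hx : x ∈ S)
    (huv : u ≠ v) (huw : u ≠ w) (hux : u ≠ x)
    (hvw : v ≠ w) (hvx : v ≠ x) (hwx : w ≠ x)
    (h1 : C.hull (S \ {u}) ∪ C.hull (S \ {v}) = C.hull S)
    (h2 : C.hull (S \ {w}) ∪ C.hull (S \ {x}) = C.hull S) :
    C.ExchangeDependent S := by
  have mono : ∀ A B : Set X, A ⊆ B → C.hull A ⊆ C.hull B := by
    intro A B hAB y hy T hT
    exact hy T ⟨hT.1, hAB.trans hT.2⟩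
  intro p hp z hz
  have hzS : z ∈ C.hull S := mono _ _ (Set.diff_subset) hz
  have key : ∀ a b : X, a ∈ S → b ∈ S → a ≠ p → b ≠ p →
      C.hull (S \ {a}) ∪ C.hull (S \ {b}) = C.hull S →
      z ∈ ⋃ a ∈ S \ {p}, C.hull (S \ {a}) := by
    intro a b ha hb hap hbp h
    rw [← h] at hzS
    rcases hzS with h' | h'
    · exact Set.mem_biUnion ⟨ha, hap⟩ h'
    · exact Set.mem_biUnion ⟨hb, hbp⟩ h'
  by_cases hpu : u = p
  · exact key w x hw hx (by rintro rfl; exact huw hpu) (by rintro rfl; exact hux hpu) h2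
  · by_cases hpv : v = p
    · exact key w x hw hx (by rintro rfl; exact hvw hpv) (by rintro rfl; exact hvx hpv) h2
    · exact key u v hu hv hpu hpv h1
end
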